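/- For every complex number q with 0 < |q| < 1, (−q;q)_∞ + ∑_{k=1}^{∞} (−1)^k ∑_{m=0}^{∞} q^{C(3k+m,2) − 3·C(k,2)} · [m+k−1 choose k−1]_{q^{−1}} · (−q^{3k+m+1}; q)_∞ / (q²;q²)_k = (−q;q)_∞ · ∑_{k=0}^{∞} (−1)^k q^{3k²} / ((q²;q²)_k · (−q;q)_{2k}), where C(a,2) = a(a−1)/2 denotes a binomial coefficient. -/

import Mathlib

open Finset

/-- Finite q-Pochhammer symbol: (a;q)_n = ∏_{j=0}^{n-1} (1 - a q^j). -/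
noncomputable def qPoch (a q : ℂ) (n : ℕ) : ℂ := ∏ j ∈ Finset.range n, (1 - a * q ^ j)

/-- Infinite q-Pochhammer symbol: (a;q)_∞ = ∏_{j=0}^{∞} (1 - a q^j). -/
noncomputable def qPochInf (a q : ℂ) : ℂ := ∏' j : ℕ, (1 - a * q ^ j)

/-- Gaussian binomial coefficient [N choose j]_q, as a rational function of q;
for 0 < |q| < 1 (and for |q⁻¹| > 1) this agrees with the q-binomial polynomial
evaluated at q. -/
noncomputable def qBinom (q : ℂ) (N j : ℕ) : ℂ :=
  qPoch q q N / (qPoch q q j * qPoch q q (N - j))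

/-!
Put `K = k + 1`. Since `[m + k choose k]_{q⁻¹} = q^{-km} [m + k choose k]_q`, the `K`-th inner
series is `q^{3K²} / (q²;q²)_K` times `X_n(s) = ∑ₘ q^{sm + C(m,2)} [m + n choose n]_q
(-q^{s+n+m+1};q)_∞` at `n = k`, `s = 2K + 1`. We show `X_n(s) = (-q^s;q)_∞` for `s ≥ 1`; then
the inner series is `q^{3K²} (-q^{2K+1};q)_∞ / (q²;q²)_K = (-q;q)_∞ q^{3K²} / ((q²;q²)_K
(-q;q)_{2K})`, the `K`-th term on the right. For the identity, induct on `n`: by q-Pascal, `X_n`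
and `(-q^s;q)_∞` both satisfy `X(s) = (-q^{s+1};q)_∞ + q^s X(s+1)` (using the case `n - 1` when
`n > 0`), and both are bounded in `s`, so their difference `d` satisfies
`‖d(s)‖ ≤ ‖q‖^N sup ‖d‖` for every `N`.
-/

open Filter Topology

lemma Nat.choose_two_add (a b : ℕ) : (a + b).choose 2 = a.choose 2 + b.choose 2 + a * b := by
  have h : ((a + b).choose 2 : ℚ) = a.choose 2 + b.choose 2 + a * b := by
    simp only [Nat.cast_choose_two, Nat.cast_add]
    ring
  exact_mod_cast h

lemma Nat.choose_two_succ (m : ℕ) : (m + 1).choose 2 = m.choose 2 + m := by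
  simp [Nat.choose_two_add]

lemma Nat.choose_two_three_mul_add_sub (K m : ℕ) :
    (3 * K + m).choose 2 - 3 * K.choose 2 = 3 * K ^ 2 + 3 * K * m + m.choose 2 := by
  refine Nat.sub_eq_of_eq_add ?_
  have h : ((3 * K + m).choose 2 : ℚ) = 3 * K ^ 2 + 3 * K * m + m.choose 2 + 3 * K.choose 2 := by
    simp only [Nat.cast_choose_two, Nat.cast_add, Nat.cast_mul, Nat.cast_ofNat]
    ring
  exact_mod_cast h

lemma Real.exp_neg_div_le_one_sub {x b : ℝ} (hx : 0 ≤ x) (hxb : x ≤ b) (hb : b < 1) :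
    Real.exp (-(x / (1 - b))) ≤ 1 - x := by
  have hx1 : 0 < 1 - x := by linarith
  calc Real.exp (-(x / (1 - b))) ≤ Real.exp (-(x / (1 - x))) := by
        gcongr
    _ = (Real.exp (x / (1 - x)))⁻¹ := Real.exp_neg _
    _ ≤ (x / (1 - x) + 1)⁻¹ := by
        gcongr
        exact Real.add_one_le_exp _
    _ = 1 - x := by field_simp; ring

lemma eq_zero_of_norm_le_mul_norm_succ {E : Type*} [NormedAddCommGroup E] {D : ℕ → E}
    {r M : ℝ} (hr0 : 0 ≤ r) (hr : r < 1) (hM : ∀ s, ‖D s‖ ≤ M)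
    (hD : ∀ s, ‖D s‖ ≤ r * ‖D (s + 1)‖) (s : ℕ) : D s = 0 := by
  have hpow : ∀ N s, ‖D s‖ ≤ r ^ N * M := by
    intro N
    induction N with
    | zero => simpa using hM
    | succ N ih =>
      intro s
      calc ‖D s‖ ≤ r * ‖D (s + 1)‖ := hD s
        _ ≤ r * (r ^ N * M) := mul_le_mul_of_nonneg_left (ih _) hr0
        _ = r ^ (N + 1) * M := by ring
  have hlim : Tendsto (fun N => r ^ N * M) atTop (𝓝 0) := by
    simpa using (tendsto_pow_atTop_nhds_zero_of_lt_one hr0 hr).mul_const M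
  exact norm_le_zero_iff.mp (ge_of_tendsto' hlim fun N => hpow N s)

lemma qPoch_zero (a q : ℂ) : qPoch a q 0 = 1 :=
  prod_range_zero _

lemma qPoch_succ (a q : ℂ) (n : ℕ) : qPoch a q (n + 1) = qPoch a q n * (1 - a * q ^ n) :=
  prod_range_succ _ _

lemma qBinom_add_left (q : ℂ) (m n : ℕ) :
    qBinom q (m + n) n = qPoch q q (m + n) / (qPoch q q n * qPoch q q m) := by
  rw [qBinom, Nat.add_sub_cancel]

section

variable {a q : ℂ}

lemma sum_range_norm_mul_pow_le (hq : ‖q‖ < 1) (n : ℕ) :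
    ∑ j ∈ range n, ‖a * q ^ j‖ ≤ ‖a‖ / (1 - ‖q‖) := by
  simp_rw [norm_mul, norm_pow, ← mul_sum, div_eq_mul_inv]
  gcongr
  exact (summable_geometric_of_lt_one (norm_nonneg q) hq).sum_le_tsum _
    (fun j _ => by positivity) |>.trans_eq (tsum_geometric_of_lt_one (norm_nonneg q) hq)

lemma norm_qPoch_le (hq : ‖q‖ < 1) (n : ℕ) :
    ‖qPoch a q n‖ ≤ Real.exp (‖a‖ / (1 - ‖q‖)) := by
  have h := (range n).norm_prod_one_add_sub_one_le fun j => -(a * q ^ j)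
  simp only [norm_neg, ← sub_eq_add_neg] at h
  calc ‖qPoch a q n‖ ≤ ‖qPoch a q n - 1‖ + 1 := by
        simpa using norm_le_norm_sub_add (qPoch a q n) (1 : ℂ)
    _ ≤ Real.exp (∑ j ∈ range n, ‖a * q ^ j‖) := by rw [qPoch]; linarith
    _ ≤ Real.exp (‖a‖ / (1 - ‖q‖)) := by gcongr; exact sum_range_norm_mul_pow_le hq n

lemma exp_le_norm_qPoch (ha : ‖a‖ < 1) (hq : ‖q‖ < 1) (n : ℕ) :
    Real.exp (-(‖a‖ / (1 - ‖q‖) / (1 - ‖a‖))) ≤ ‖qPoch a q n‖ := by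
  have hfac : ∀ j, ‖a * q ^ j‖ ≤ ‖a‖ := fun j => by
    rw [norm_mul, norm_pow]
    exact mul_le_of_le_one_right (norm_nonneg a) (pow_le_one₀ (norm_nonneg q) hq.le)
  calc Real.exp (-(‖a‖ / (1 - ‖q‖) / (1 - ‖a‖)))
      ≤ Real.exp (-((∑ j ∈ range n, ‖a * q ^ j‖) / (1 - ‖a‖))) := by
        have := sum_range_norm_mul_pow_le (a := a) hq n
        gcongr
    _ = ∏ j ∈ range n, Real.exp (-(‖a * q ^ j‖ / (1 - ‖a‖))) := by
        rw [← Real.exp_sum, sum_div, sum_neg_distrib]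
    _ ≤ ∏ j ∈ range n, (1 - ‖a * q ^ j‖) := by
        gcongr with j
        exact Real.exp_neg_div_le_one_sub (norm_nonneg _) (hfac j) ha
    _ ≤ ∏ j ∈ range n, ‖1 - a * q ^ j‖ := by
        refine prod_le_prod (fun j _ => by linarith [hfac j]) fun j _ => ?_
        simpa using norm_sub_norm_le (1 : ℂ) (a * q ^ j)
    _ = ‖qPoch a q n‖ := by rw [qPoch, norm_prod]

lemma qPoch_ne_zero (ha : ‖a‖ < 1) (hq : ‖q‖ < 1) (n : ℕ) : qPoch a q n ≠ 0 :=
  norm_pos_iff.mp ((Real.exp_pos _).trans_le (exp_le_norm_qPoch ha hq n))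

lemma multipliable_one_sub_mul_pow (hq : ‖q‖ < 1) (a : ℂ) :
    Multipliable fun j => 1 - a * q ^ j := by
  simp_rw [sub_eq_add_neg]
  exact Complex.multipliable_one_add_of_summable
    ((summable_geometric_of_norm_lt_one hq).mul_left a).neg

lemma qPoch_mul_qPochInf (hq : ‖q‖ < 1) (a : ℂ) (n : ℕ) :
    qPoch a q n * qPochInf (a * q ^ n) q = qPochInf a q := by
  have h := (multipliable_one_sub_mul_pow hq (a * q ^ n)).congr fun j => by
    rw [mul_assoc, ← pow_add, add_comm]
  simpa only [qPochInf, qPoch, mul_assoc, ← pow_add, add_comm n] using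
    (Multipliable.prod_mul_tprod_nat_mul' (f := fun j => 1 - a * q ^ j) h)

lemma qPochInf_eq_one_sub_mul (hq : ‖q‖ < 1) (a : ℂ) :
    qPochInf a q = (1 - a) * qPochInf (a * q) q := by
  simpa [qPoch] using (qPoch_mul_qPochInf hq a 1).symm

lemma norm_qPochInf_le (hq : ‖q‖ < 1) (a : ℂ) :
    ‖qPochInf a q‖ ≤ Real.exp (‖a‖ / (1 - ‖q‖)) :=
  le_of_tendsto' ((multipliable_one_sub_mul_pow hq a).hasProd.tendsto_prod_nat.norm)
    fun n => norm_qPoch_le hq n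

lemma qBinom_zero_right {m : ℕ} (hP : qPoch q q m ≠ 0) : qBinom q m 0 = 1 := by
  rw [qBinom, Nat.sub_zero, qPoch_zero, one_mul, div_self hP]

lemma qBinom_self {n : ℕ} (hP : qPoch q q n ≠ 0) : qBinom q n n = 1 := by
  rw [qBinom, Nat.sub_self, qPoch_zero, mul_one, div_self hP]

lemma qBinom_succ_add_succ (hP : ∀ i, qPoch q q i ≠ 0) (m n : ℕ) :
    qBinom q (m + 1 + (n + 1)) (n + 1) =
      qBinom q (m + (n + 1)) (n + 1) + q ^ (m + 1) * qBinom q (m + 1 + n) n := by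
  rw [qBinom_add_left, qBinom_add_left, qBinom_add_left,
    show m + 1 + (n + 1) = m + n + 1 + 1 by ring, show m + (n + 1) = m + n + 1 by ring,
    show m + 1 + n = m + n + 1 by ring,
    qPoch_succ _ _ (m + n + 1), qPoch_succ _ _ n, qPoch_succ _ _ m]
  have := hP n
  have := hP m
  have := hP (m + n + 1)
  have : 1 - q * q ^ n ≠ 0 := right_ne_zero_of_mul (qPoch_succ q q n ▸ hP (n + 1))
  have : 1 - q * q ^ m ≠ 0 := right_ne_zero_of_mul (qPoch_succ q q m ▸ hP (m + 1))
  field_simp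
  ring

lemma qPoch_inv (hq0 : q ≠ 0) (n : ℕ) :
    qPoch q⁻¹ q⁻¹ n = (-1) ^ n * (q ^ (n + 1).choose 2)⁻¹ * qPoch q q n := by
  induction n with
  | zero => simp [qPoch_zero]
  | succ n ih =>
    rw [qPoch_succ, qPoch_succ, ih, ← pow_succ', inv_pow, Nat.choose_two_succ (n + 1), pow_add]
    field_simp
    ring

lemma qBinom_inv (hq0 : q ≠ 0) (m n : ℕ) :
    qBinom q⁻¹ (m + n) n = (q ^ (m * n))⁻¹ * qBinom q (m + n) n := by
  rw [qBinom_add_left, qBinom_add_left, qPoch_inv hq0, qPoch_inv hq0, qPoch_inv hq0,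
    show m + n + 1 = (n + 1) + m by ring, Nat.choose_two_add, Nat.choose_two_succ m]
  simp only [pow_add]
  field_simp
  ring

lemma exists_norm_qBinom_le (hq : ‖q‖ < 1) : ∃ C, ∀ N j, ‖qBinom q N j‖ ≤ C := by
  set c := Real.exp (-(‖q‖ / (1 - ‖q‖) / (1 - ‖q‖)))
  have hc : 0 < c := Real.exp_pos _
  refine ⟨Real.exp (‖q‖ / (1 - ‖q‖)) / (c * c), fun N j => ?_⟩
  rw [qBinom, norm_div, norm_mul]
  exact div_le_div₀ (Real.exp_pos _).le (norm_qPoch_le hq N) (by positivity)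
    (mul_le_mul (exp_le_norm_qPoch hq hq j) (exp_le_norm_qPoch hq hq _) hc.le (norm_nonneg _))

lemma norm_qPochInf_neg_pow_le (hq : ‖q‖ < 1) (r : ℕ) :
    ‖qPochInf (-q ^ r) q‖ ≤ Real.exp (1 / (1 - ‖q‖)) := by
  refine (norm_qPochInf_le hq _).trans ?_
  have : 0 < 1 - ‖q‖ := by linarith
  gcongr
  rw [norm_neg, norm_pow]
  exact pow_le_one₀ (norm_nonneg q) hq.le

noncomputable def qBinomTerm (q : ℂ) (n s m : ℕ) : ℂ :=
  q ^ (s * m + m.choose 2) * qBinom q (m + n) n * qPochInf (-q ^ (s + n + m + 1)) q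

lemma exists_norm_qBinomTerm_le (hq : ‖q‖ < 1) :
    ∃ C, ∀ n s m, 1 ≤ s → ‖qBinomTerm q n s m‖ ≤ C * ‖q‖ ^ m := by
  obtain ⟨B, hB⟩ := exists_norm_qBinom_le hq
  refine ⟨Real.exp (1 / (1 - ‖q‖)) * B, fun n s m hs => ?_⟩
  have hpow : ‖q ^ (s * m + m.choose 2)‖ ≤ ‖q‖ ^ m := by
    rw [norm_pow]
    exact pow_le_pow_of_le_one (norm_nonneg q) hq.le (by nlinarith)
  rw [qBinomTerm, norm_mul, norm_mul]
  calc _ ≤ ‖q‖ ^ m * B * Real.exp (1 / (1 - ‖q‖)) := by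
        have : 0 ≤ B := (norm_nonneg _).trans (hB 0 0)
        gcongr
        · exact hB _ _
        · exact norm_qPochInf_neg_pow_le hq _
    _ = Real.exp (1 / (1 - ‖q‖)) * B * ‖q‖ ^ m := by ring

lemma summable_qBinomTerm (hq : ‖q‖ < 1) (n : ℕ) {s : ℕ} (hs : 1 ≤ s) :
    Summable (qBinomTerm q n s) := by
  obtain ⟨C, hC⟩ := exists_norm_qBinomTerm_le hq
  exact .of_norm_bounded ((summable_geometric_of_lt_one (norm_nonneg q) hq).mul_left C)
    fun m => hC n s m hs

lemma exists_norm_tsum_qBinomTerm_le (hq : ‖q‖ < 1) :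
    ∃ M, ∀ n s, 1 ≤ s → ‖∑' m, qBinomTerm q n s m‖ ≤ M := by
  obtain ⟨C, hC⟩ := exists_norm_qBinomTerm_le hq
  exact ⟨C * (1 - ‖q‖)⁻¹, fun n s hs => tsum_of_norm_bounded
    ((hasSum_geometric_of_lt_one (norm_nonneg q) hq).mul_left C) fun m => hC n s m hs⟩

lemma tsum_qBinomTerm_zero (hq : ‖q‖ < 1) {s : ℕ} (hs : 1 ≤ s) :
    ∑' m, qBinomTerm q 0 s m =
      qPochInf (-q ^ (s + 1)) q + q ^ s * ∑' m, qBinomTerm q 0 (s + 1) m := by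
  have hP : ∀ i, qPoch q q i ≠ 0 := qPoch_ne_zero hq hq
  rw [(summable_qBinomTerm hq 0 hs).tsum_eq_zero_add, ← tsum_mul_left]
  congr 1
  · simp [qBinomTerm, qBinom_zero_right (hP 0)]
  · refine tsum_congr fun m => ?_
    simp only [qBinomTerm, add_zero, qBinom_zero_right (hP _), mul_one, Nat.choose_two_succ,
      show s + (m + 1) + 1 = s + 1 + m + 1 by ring]
    ring

lemma tsum_qBinomTerm_succ (hq : ‖q‖ < 1) (n : ℕ) {s : ℕ} (hs : 1 ≤ s) :
    ∑' m, qBinomTerm q (n + 1) s m =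
      ∑' m, qBinomTerm q n (s + 1) m + q ^ s * ∑' m, qBinomTerm q (n + 1) (s + 1) m := by
  have hP : ∀ i, qPoch q q i ≠ 0 := qPoch_ne_zero hq hq
  have hs' : 1 ≤ s + 1 := by omega
  rw [(summable_qBinomTerm hq (n + 1) hs).tsum_eq_zero_add,
    (summable_qBinomTerm hq n hs').tsum_eq_zero_add, ← tsum_mul_left, add_assoc,
    ← ((summable_nat_add_iff 1).mpr (summable_qBinomTerm hq n hs')).tsum_add
      ((summable_qBinomTerm hq (n + 1) hs').mul_left _)]
  congr 1
  · simp [qBinomTerm, qBinom_self (hP _), show s + (n + 1) = s + 1 + n by ring]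
  · refine tsum_congr fun m => ?_
    simp only [qBinomTerm, qBinom_succ_add_succ hP, Nat.choose_two_succ,
      show s + (n + 1) + (m + 1) + 1 = s + 1 + n + (m + 1) + 1 by ring,
      show s + 1 + (n + 1) + m + 1 = s + 1 + n + (m + 1) + 1 by ring]
    ring

lemma qPochInf_neg_pow_eq (hq : ‖q‖ < 1) (s : ℕ) :
    qPochInf (-q ^ s) q = qPochInf (-q ^ (s + 1)) q + q ^ s * qPochInf (-q ^ (s + 1)) q := by
  rw [qPochInf_eq_one_sub_mul hq, neg_mul, ← pow_succ]
  ring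

lemma eq_of_eq_add_pow_mul {F G A : ℕ → ℂ} {M : ℝ} (hq : ‖q‖ < 1)
    (hF : ∀ s, ‖F s‖ ≤ M) (hG : ∀ s, ‖G s‖ ≤ M)
    (hFA : ∀ s, F s = A s + q ^ (s + 1) * F (s + 1))
    (hGA : ∀ s, G s = A s + q ^ (s + 1) * G (s + 1)) (s : ℕ) : F s = G s := by
  refine sub_eq_zero.mp (eq_zero_of_norm_le_mul_norm_succ (D := F - G) (M := M + M)
    (norm_nonneg q) hq (fun s => (norm_sub_le _ _).trans (add_le_add (hF s) (hG s)))
    (fun s => ?_) s)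
  rw [Pi.sub_apply, Pi.sub_apply, hFA, hGA, add_sub_add_left_eq_sub, ← mul_sub, norm_mul,
    norm_pow]
  gcongr
  exact pow_le_of_le_one (norm_nonneg q) hq.le (Nat.succ_ne_zero s)

theorem tsum_qBinomTerm (hq : ‖q‖ < 1) (n : ℕ) {s : ℕ} (hs : 1 ≤ s) :
    ∑' m, qBinomTerm q n s m = qPochInf (-q ^ s) q := by
  obtain ⟨M, hM⟩ := exists_norm_tsum_qBinomTerm_le hq
  have key : ∀ n, (∀ s, 1 ≤ s → ∑' m, qBinomTerm q n s m =
      qPochInf (-q ^ (s + 1)) q + q ^ s * ∑' m, qBinomTerm q n (s + 1) m) →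
      ∀ s, 1 ≤ s → ∑' m, qBinomTerm q n s m = qPochInf (-q ^ s) q := by
    intro n hrec s hs
    obtain ⟨s, rfl⟩ := Nat.exists_eq_add_of_le' hs
    exact eq_of_eq_add_pow_mul hq (M := max M (Real.exp (1 / (1 - ‖q‖))))
      (A := fun s => qPochInf (-q ^ (s + 2)) q)
      (fun s => (hM n (s + 1) (by omega)).trans (le_max_left _ _))
      (fun s => (norm_qPochInf_neg_pow_le hq _).trans (le_max_right _ _))
      (fun s => hrec (s + 1) (by omega)) (fun s => qPochInf_neg_pow_eq hq (s + 1)) s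
  induction n generalizing s with
  | zero => exact key 0 (fun s hs => tsum_qBinomTerm_zero hq hs) s hs
  | succ n ih =>
    refine key (n + 1) (fun s hs => ?_) s hs
    rw [tsum_qBinomTerm_succ hq n hs, ih (by omega)]

lemma inner_tsum_eq_qPochInf_mul (hq0 : q ≠ 0) (hq : ‖q‖ < 1) (k : ℕ) :
    ∑' m : ℕ, q ^ (Nat.choose (3 * (k + 1) + m) 2 - 3 * Nat.choose (k + 1) 2) *
        qBinom q⁻¹ (m + (k + 1) - 1) ((k + 1) - 1) *
        qPochInf (-(q ^ (3 * (k + 1) + m + 1))) q / qPoch (q ^ 2) (q ^ 2) (k + 1) =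
      qPochInf (-q) q * (q ^ (3 * (k + 1) ^ 2) /
        (qPoch (q ^ 2) (q ^ 2) (k + 1) * qPoch (-q) q (2 * (k + 1)))) := by
  have hterm : ∀ m : ℕ, q ^ (Nat.choose (3 * (k + 1) + m) 2 - 3 * Nat.choose (k + 1) 2) *
        qBinom q⁻¹ (m + (k + 1) - 1) ((k + 1) - 1) *
        qPochInf (-(q ^ (3 * (k + 1) + m + 1))) q / qPoch (q ^ 2) (q ^ 2) (k + 1) =
      q ^ (3 * (k + 1) ^ 2) / qPoch (q ^ 2) (q ^ 2) (k + 1) * qBinomTerm q k (2 * k + 3) m := by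
    intro m
    rw [Nat.choose_two_three_mul_add_sub, Nat.add_sub_cancel, Nat.add_succ_sub_one, qBinom_inv hq0,
      qBinomTerm, show 3 * (k + 1) + m + 1 = 2 * k + 3 + k + m + 1 by ring,
      show 3 * (k + 1) ^ 2 + 3 * (k + 1) * m + m.choose 2 =
        m * k + (3 * (k + 1) ^ 2 + ((2 * k + 3) * m + m.choose 2)) by ring, pow_add, pow_add]
    field_simp
  have hsplit :
      qPochInf (-q) q = qPoch (-q) q (2 * (k + 1)) * qPochInf (-q ^ (2 * k + 3)) q := by
    rw [← qPoch_mul_qPochInf hq (-q) (2 * (k + 1)), neg_mul, ← pow_succ']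
    ring_nf
  have hP : qPoch (-q) q (2 * (k + 1)) ≠ 0 := qPoch_ne_zero (by rwa [norm_neg]) hq _
  rw [tsum_congr hterm, tsum_mul_left, tsum_qBinomTerm hq k (by omega), hsplit]
  field_simp

lemma summable_slater_term (hq : ‖q‖ < 1) :
    Summable fun k : ℕ => (-1 : ℂ) ^ k * q ^ (3 * k ^ 2) /
      (qPoch (q ^ 2) (q ^ 2) k * qPoch (-q) q (2 * k)) := by
  have hq2 : ‖q ^ 2‖ < 1 := by rw [norm_pow]; exact pow_lt_one₀ (norm_nonneg q) hq two_ne_zero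
  have hqn : ‖-q‖ < 1 := by rwa [norm_neg]
  set c := Real.exp (-(‖q ^ 2‖ / (1 - ‖q ^ 2‖) / (1 - ‖q ^ 2‖))) *
    Real.exp (-(‖-q‖ / (1 - ‖q‖) / (1 - ‖-q‖)))
  refine .of_norm_bounded ((summable_geometric_of_lt_one (norm_nonneg q) hq).div_const c)
    fun k => ?_
  rw [norm_div, norm_mul, norm_mul, norm_pow, norm_pow, norm_neg, norm_one, one_pow, one_mul]
  refine div_le_div₀ (by positivity) (pow_le_pow_of_le_one (norm_nonneg q) hq.le (by nlinarith))
    (by positivity) (mul_le_mul (exp_le_norm_qPoch hq2 hq2 k) (exp_le_norm_qPoch hqn hq _)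
      (Real.exp_pos _).le (norm_nonneg _))

end

/-- The inclusion-exclusion series equals Slater's series No. 19. -/
theorem no_raft_series_eq_slater_series (q : ℂ) (hq0 : q ≠ 0)
    (hq : ‖q‖ < 1) :
    qPochInf (-q) q +
      ∑' k : ℕ, (-1 : ℂ) ^ (k + 1) *
        ∑' m : ℕ, q ^ (Nat.choose (3 * (k + 1) + m) 2 - 3 * Nat.choose (k + 1) 2) *
          qBinom q⁻¹ (m + (k + 1) - 1) ((k + 1) - 1) *
          qPochInf (-(q ^ (3 * (k + 1) + m + 1))) q / qPoch (q ^ 2) (q ^ 2) (k + 1) =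
    qPochInf (-q) q *
      ∑' k : ℕ, ((-1 : ℂ) ^ k * q ^ (3 * k ^ 2) /
        (qPoch (q ^ 2) (q ^ 2) k * qPoch (-q) q (2 * k))) := by
  rw [(summable_slater_term hq).tsum_eq_zero_add, mul_add, ← tsum_mul_left]
  congr 1
  · simp [qPoch_zero]
  · refine tsum_congr fun k => ?_
    rw [inner_tsum_eq_qPochInf_mul hq0 hq k]
    ring
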